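/- Let A = ℚ[t₁, t₂, t₃] ⊗ Λ(v₁,…,v₅) with deg v₁ = deg v₂ = deg v₃ = 3 and deg v₄ = deg v₅ = 7, and let D be the unique derivation of degree +1 on A with D t_i = 0 for all i, D v₁ = D v₂ = 0, D v₃ = t₂², D v₄ = t₁⁴ + v₁v₂t₁ and D v₅ = t₃⁴. Then D ∘ D = 0 and dim_ℚ H(A, D) < ∞. -/

import Mathlib

/- D v₃ = t₂², D v₄ = t₁⁴ + v₁v₂t₁, D v₅ = t₃⁴ on ℚ[t₁,t₂,t₃] ⊗ Λ(v₁,…,v₅), deg v = (3,3,3,7,7). -/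

open scoped TensorProduct

set_option synthInstance.maxHeartbeats 1000000
set_option maxHeartbeats 1000000

noncomputable section

/-- The free graded-commutative ℚ-algebra `ℚ[t₁,…,t_r] ⊗ Λ(v₁,…,v_n)`:
the tensor product of a polynomial algebra on `r` generators of degree 2 with
an exterior algebra on `n` generators of odd degrees. -/
abbrev FGCA (r n : ℕ) : Type :=
  MvPolynomial (Fin r) ℚ ⊗[ℚ] ExteriorAlgebra ℚ (Fin n → ℚ)

/-- The degree-2 polynomial generators `tᵢ`. -/
def tg (r n : ℕ) (i : Fin r) : FGCA r n := (MvPolynomial.X i) ⊗ₜ 1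

/-- The odd-degree exterior generators `vⱼ`. -/
def vg (r n : ℕ) (j : Fin n) : FGCA r n :=
  1 ⊗ₜ (ExteriorAlgebra.ι ℚ (Pi.single j (1 : ℚ)))

/-- The monomial `t^α · v_S` (with the exterior factors multiplied in increasing
order of index).  These monomials form a ℚ-basis of `FGCA r n`. -/
def gmon (r n : ℕ) (α : Fin r →₀ ℕ) (S : Finset (Fin n)) : FGCA r n :=
  (MvPolynomial.monomial α (1 : ℚ)) ⊗ₜ
    ((S.sort (· ≤ ·)).map fun j => ExteriorAlgebra.ι ℚ (Pi.single j (1 : ℚ))).prod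

/-- The (cohomological) degree of the monomial `t^α · v_S`, where each `tᵢ` has
degree `2` and each `vⱼ` has degree `dv j`. -/
def gdeg (r n : ℕ) (dv : Fin n → ℕ) (α : Fin r →₀ ℕ) (S : Finset (Fin n)) : ℕ :=
  (α.sum fun _ k => 2 * k) + S.sum dv

/-- The homogeneous part of degree `k` of `FGCA r n`: the span of the monomials
of degree `k`. -/
def homog (r n : ℕ) (dv : Fin n → ℕ) (k : ℕ) : Submodule ℚ (FGCA r n) :=
  Submodule.span ℚ { a | ∃ α S, gdeg r n dv α S = k ∧ a = gmon r n α S }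

/-- The graded Leibniz rule for a degree `+1` derivation `D`:
`D(ab) = D(a)·b + (−1)^(deg a) a·D(b)` for homogeneous `a`. -/
def IsLeibniz (r n : ℕ) (dv : Fin n → ℕ) (D : FGCA r n →ₗ[ℚ] FGCA r n) : Prop :=
  ∀ (p : ℕ) (a b : FGCA r n), a ∈ homog r n dv p →
    D (a * b) = D a * b + ((-1 : ℚ) ^ p) • (a * D b)

/-- `D` raises (cohomological) degree by `1`. -/
def RaisesDegByOne (r n : ℕ) (dv : Fin n → ℕ) (D : FGCA r n →ₗ[ℚ] FGCA r n) : Prop :=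
  ∀ (k : ℕ), ∀ a ∈ homog r n dv k, D a ∈ homog r n dv (k + 1)

/-- The cohomology `H(A, D) = ker D / im D` as a ℚ-vector space, realized as the
image of `ker D` in `A ⧸ im D`. -/
abbrev Cohomology (r n : ℕ) (D : FGCA r n →ₗ[ℚ] FGCA r n) : Type :=
  (LinearMap.ker D).map (LinearMap.range D).mkQ

end

noncomputable section

local notation "dv" => (![3, 3, 3, 7, 7] : Fin 5 → ℕ)
local notation "t₁" => tg 3 5 0
local notation "t₂" => tg 3 5 1
local notation "t₃" => tg 3 5 2
local notation "v₁" => vg 3 5 0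
local notation "v₂" => vg 3 5 1
local notation "v₃" => vg 3 5 2
local notation "v₄" => vg 3 5 3
local notation "v₅" => vg 3 5 4

open MvPolynomial ExteriorAlgebra

abbrev Rr : Type := MvPolynomial (Fin 3) ℚ
abbrev Ee : Type := ExteriorAlgebra ℚ (Fin 5 → ℚ)

def ee (j : Fin 5) : Ee := ExteriorAlgebra.ι ℚ (Pi.single j (1:ℚ))

def prodL (l : List (Fin 5)) : Ee := (l.map ee).prod

lemma gmon_eq (α : Fin 3 →₀ ℕ) (S : Finset (Fin 5)) :
    gmon 3 5 α S = (monomial α (1:ℚ)) ⊗ₜ[ℚ] prodL (S.sort (· ≤ ·)) := rfl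

lemma mem_homog_gmon (α : Fin 3 →₀ ℕ) (S : Finset (Fin 5)) :
    gmon 3 5 α S ∈ homog 3 5 dv (gdeg 3 5 dv α S) :=
  Submodule.subset_span ⟨α, S, rfl, rfl⟩

lemma one_eq_gmon : (1 : FGCA 3 5) = gmon 3 5 0 ∅ := by
  rw [gmon_eq]
  simp [prodL, Algebra.TensorProduct.one_def]

lemma one_mem : (1 : FGCA 3 5) ∈ homog 3 5 dv 0 := by
  have h := mem_homog_gmon 0 ∅
  rw [← one_eq_gmon] at h
  simpa [gdeg] using h

lemma tg_eq (i : Fin 3) : tg 3 5 i = gmon 3 5 (Finsupp.single i 1) ∅ := by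
  rw [gmon_eq]
  simp [tg, prodL, ← MvPolynomial.X_pow_eq_monomial]

lemma tg_mem (i : Fin 3) : tg 3 5 i ∈ homog 3 5 dv 2 := by
  have h := mem_homog_gmon (Finsupp.single i 1) ∅
  rw [← tg_eq] at h
  simpa [gdeg, Finsupp.sum_single_index] using h

lemma vg_eq (j : Fin 5) : vg 3 5 j = gmon 3 5 0 {j} := by
  rw [gmon_eq]
  simp [vg, prodL, ee, Algebra.TensorProduct.one_def]

lemma vg_mem (j : Fin 5) : vg 3 5 j ∈ homog 3 5 dv (dv j) := by
  have h := mem_homog_gmon 0 {j}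
  rw [← vg_eq] at h
  simpa [gdeg] using h


section Dlemmas

variable (D : FGCA 3 5 →ₗ[ℚ] FGCA 3 5)

lemma D_one (hLeib : IsLeibniz 3 5 dv D) : D 1 = 0 := by
  have h := hLeib 0 1 1 one_mem
  simpa using h

lemma D_t_mul (i : Fin 3) (hDt : D (tg 3 5 i) = 0)
    (hLeib : IsLeibniz 3 5 dv D) (x : FGCA 3 5) :
    D (tg 3 5 i * x) = tg 3 5 i * D x := by
  have h := hLeib 2 (tg 3 5 i) x (tg_mem i)
  simpa [hDt] using h

lemma D_p_mul (hLeib : IsLeibniz 3 5 dv D)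
    (hDt : ∀ i, D (tg 3 5 i) = 0) (p : Rr) (x : FGCA 3 5) :
    D ((p ⊗ₜ[ℚ] (1:Ee)) * x) = (p ⊗ₜ[ℚ] (1:Ee)) * D x := by
  induction p using MvPolynomial.induction_on generalizing x with
  | C r =>
      have h1 : ((C r : Rr) ⊗ₜ[ℚ] (1:Ee)) = r • (1 : FGCA 3 5) := by
        rw [Algebra.TensorProduct.one_def]
        rw [TensorProduct.smul_tmul']
        congr 1
        simp [MvPolynomial.C_eq_smul_one]
      rw [h1, smul_mul_assoc, one_mul, map_smul, smul_mul_assoc, one_mul]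
  | add p q hp hq =>
      rw [TensorProduct.add_tmul, add_mul, map_add, hp, hq, add_mul]
  | mul_X p i hp =>
      have h1 : ((p * X i : Rr) ⊗ₜ[ℚ] (1:Ee)) = (p ⊗ₜ[ℚ] (1:Ee)) * ((X i : Rr) ⊗ₜ[ℚ] (1:Ee)) := by
        rw [Algebra.TensorProduct.tmul_mul_tmul, mul_one]
      have h2 : ((X i : Rr) ⊗ₜ[ℚ] (1:Ee)) = tg 3 5 i := rfl
      rw [h1, h2, mul_assoc, hp, D_t_mul D i (hDt i) hLeib, ← mul_assoc]

lemma D_smul (hLeib : IsLeibniz 3 5 dv D) (hDt : ∀ i, D (tg 3 5 i) = 0)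
    (r : Rr) (x : FGCA 3 5) : D (r • x) = r • D x := by
  have h1 : ∀ y : FGCA 3 5, r • y = (r ⊗ₜ[ℚ] (1:Ee)) * y := by
    intro y
    induction y using TensorProduct.induction_on with
    | zero => simp
    | tmul p q =>
        rw [TensorProduct.smul_tmul', Algebra.TensorProduct.tmul_mul_tmul, one_mul, smul_eq_mul]
    | add a b ha hb => rw [smul_add, mul_add, ha, hb]
  rw [h1, h1, D_p_mul D hLeib hDt]

lemma dv_odd_sign (j : Fin 5) : ((-1:ℚ)) ^ (dv j) = -1 := by
  fin_cases j <;> norm_num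

lemma D_v_mul (hLeib : IsLeibniz 3 5 dv D) (j : Fin 5) (x : FGCA 3 5) :
    D (vg 3 5 j * x) = D (vg 3 5 j) * x - vg 3 5 j * D x := by
  have h := hLeib (dv j) (vg 3 5 j) x (vg_mem j)
  rw [dv_odd_sign] at h
  rw [h]
  have h2 : (-1:ℚ) • (vg 3 5 j * D x) = -(vg 3 5 j * D x) :=
    neg_one_smul ℚ (vg 3 5 j * D x)
  rw [h2, ← sub_eq_add_neg]

lemma D_Dv_mul (hLeib : IsLeibniz 3 5 dv D) (hdeg : RaisesDegByOne 3 5 dv D)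
    (j : Fin 5) (x : FGCA 3 5) :
    D (D (vg 3 5 j) * x) = D (D (vg 3 5 j)) * x + D (vg 3 5 j) * D x := by
  have hm : D (vg 3 5 j) ∈ homog 3 5 dv (dv j + 1) := hdeg _ _ (vg_mem j)
  have h := hLeib (dv j + 1) (D (vg 3 5 j)) x hm
  have hs : ((-1:ℚ)) ^ (dv j + 1) = 1 := by
    rw [pow_succ, dv_odd_sign]; norm_num
  rw [hs] at h
  simpa using h

lemma D2_v_mul (hLeib : IsLeibniz 3 5 dv D) (hdeg : RaisesDegByOne 3 5 dv D)
    (j : Fin 5) (x : FGCA 3 5) (h1 : D (D (vg 3 5 j)) = 0) (h2 : D (D x) = 0) :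
    D (D (vg 3 5 j * x)) = 0 := by
  rw [D_v_mul D hLeib, map_sub, D_Dv_mul D hLeib hdeg, D_v_mul D hLeib, h1, h2]
  simp

lemma D_c (hLeib : IsLeibniz 3 5 dv D)
    (hD0 : D (tg 3 5 0) = 0) (hD3 : D (vg 3 5 0) = 0) (hD4 : D (vg 3 5 1) = 0) :
    D (vg 3 5 0 * vg 3 5 1 * tg 3 5 0) = 0 := by
  rw [mul_assoc, D_v_mul D hLeib, hD3, D_v_mul D hLeib, hD4, hD0]
  simp

lemma D_tpow (hLeib : IsLeibniz 3 5 dv D) (i : Fin 3) (hDt : D (tg 3 5 i) = 0)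
    (k : ℕ) : D (tg 3 5 i ^ k) = 0 := by
  induction k with
  | zero => simpa using D_one D hLeib
  | succ n ih =>
      rw [pow_succ', D_t_mul D i hDt hLeib, ih, mul_zero]

lemma D2_vg (hLeib : IsLeibniz 3 5 dv D)
    (hD0 : D (tg 3 5 0) = 0) (hD1 : D (tg 3 5 1) = 0) (hD2 : D (tg 3 5 2) = 0)
    (hD3 : D (vg 3 5 0) = 0) (hD4 : D (vg 3 5 1) = 0)
    (hD5 : D (vg 3 5 2) = tg 3 5 1 ^ 2)
    (hD6 : D (vg 3 5 3) = tg 3 5 0 ^ 4 + vg 3 5 0 * vg 3 5 1 * tg 3 5 0)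
    (hD7 : D (vg 3 5 4) = tg 3 5 2 ^ 4) (j : Fin 5) :
    D (D (vg 3 5 j)) = 0 := by
  fin_cases j
  · show D (D (vg 3 5 0)) = 0
    rw [hD3]; simp
  · show D (D (vg 3 5 1)) = 0
    rw [hD4]; simp
  · show D (D (vg 3 5 2)) = 0
    rw [hD5]; exact D_tpow D hLeib 1 hD1 2
  · show D (D (vg 3 5 3)) = 0
    rw [hD6, map_add, D_tpow D hLeib 0 hD0 4,
      D_c D hLeib hD0 hD3 hD4, add_zero]
  · show D (D (vg 3 5 4)) = 0
    rw [hD7]; exact D_tpow D hLeib 2 hD2 4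

lemma prodL_cons (j : Fin 5) (l : List (Fin 5)) :
    prodL (j :: l) = ee j * prodL l := by
  simp [prodL]

lemma one_tmul_mul (a b : Ee) :
    ((1:Rr) ⊗ₜ[ℚ] a) * ((1:Rr) ⊗ₜ[ℚ] b) = (1:Rr) ⊗ₜ[ℚ] (a * b) := by
  rw [Algebra.TensorProduct.tmul_mul_tmul, one_mul]

lemma D2_prodL (hLeib : IsLeibniz 3 5 dv D) (hdeg : RaisesDegByOne 3 5 dv D)
    (hD0 : D (tg 3 5 0) = 0) (hD1 : D (tg 3 5 1) = 0) (hD2 : D (tg 3 5 2) = 0)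
    (hD3 : D (vg 3 5 0) = 0) (hD4 : D (vg 3 5 1) = 0)
    (hD5 : D (vg 3 5 2) = tg 3 5 1 ^ 2)
    (hD6 : D (vg 3 5 3) = tg 3 5 0 ^ 4 + vg 3 5 0 * vg 3 5 1 * tg 3 5 0)
    (hD7 : D (vg 3 5 4) = tg 3 5 2 ^ 4) (l : List (Fin 5)) :
    D (D ((1:Rr) ⊗ₜ[ℚ] prodL l)) = 0 := by
  induction l with
  | nil =>
      have h : ((1:Rr) ⊗ₜ[ℚ] prodL []) = (1 : FGCA 3 5) := by
        simp [prodL, Algebra.TensorProduct.one_def]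
      rw [h, D_one D hLeib]; simp
  | cons j l ih =>
      have h : ((1:Rr) ⊗ₜ[ℚ] prodL (j :: l)) = vg 3 5 j * ((1:Rr) ⊗ₜ[ℚ] prodL l) := by
        rw [prodL_cons, ← one_tmul_mul]; rfl
      rw [h]
      exact D2_v_mul D hLeib hdeg j _
        (D2_vg D hLeib hD0 hD1 hD2 hD3 hD4 hD5 hD6 hD7 j) ih

lemma D2_gmon (hLeib : IsLeibniz 3 5 dv D) (hdeg : RaisesDegByOne 3 5 dv D)
    (hD0 : D (tg 3 5 0) = 0) (hD1 : D (tg 3 5 1) = 0) (hD2 : D (tg 3 5 2) = 0)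
    (hD3 : D (vg 3 5 0) = 0) (hD4 : D (vg 3 5 1) = 0)
    (hD5 : D (vg 3 5 2) = tg 3 5 1 ^ 2)
    (hD6 : D (vg 3 5 3) = tg 3 5 0 ^ 4 + vg 3 5 0 * vg 3 5 1 * tg 3 5 0)
    (hD7 : D (vg 3 5 4) = tg 3 5 2 ^ 4) (α : Fin 3 →₀ ℕ) (S : Finset (Fin 5)) :
    D (D (gmon 3 5 α S)) = 0 := by
  have hDt : ∀ i, D (tg 3 5 i) = 0 := by
    intro i; fin_cases i <;> assumption
  have h : gmon 3 5 α S =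
      ((monomial α (1:ℚ) : Rr) ⊗ₜ[ℚ] (1:Ee)) * ((1:Rr) ⊗ₜ[ℚ] prodL (S.sort (· ≤ ·))) := by
    rw [gmon_eq, Algebra.TensorProduct.tmul_mul_tmul, mul_one, one_mul]
  rw [h, D_p_mul D hLeib hDt, D_p_mul D hLeib hDt,
    D2_prodL D hLeib hdeg hD0 hD1 hD2 hD3 hD4 hD5 hD6 hD7, mul_zero]

end Dlemmas

def Espan : Submodule ℚ (FGCA 3 5) := Submodule.span ℚ {a | ∃ S, a = gmon 3 5 0 S}

def Vspan : Submodule ℚ (FGCA 3 5) := Submodule.span ℚ {a | ∃ α S, a = gmon 3 5 α S}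

lemma ee_anticomm (j k : Fin 5) : ee j * ee k = -(ee k * ee j) := by
  have h' : ee j * ee k + ee k * ee j = 0 :=
    ExteriorAlgebra.ι_add_mul_swap (R := ℚ)
      ((Pi.single j (1:ℚ) : Fin 5 → ℚ)) ((Pi.single k (1:ℚ) : Fin 5 → ℚ))
  exact eq_neg_of_add_eq_zero_left h'

lemma LX (l : List (Fin 5)) (hl : l.Pairwise (· < ·)) (j : Fin 5) :
    ∃ (c : ℚ) (m : List (Fin 5)), m.Pairwise (· < ·) ∧ (∀ x ∈ m, x = j ∨ x ∈ l) ∧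
      ee j * prodL l = c • prodL m := by
  induction l with
  | nil =>
      refine ⟨1, [j], ?_, ?_, ?_⟩
      · simp
      · simp
      · simp [prodL]
  | cons k l ih =>
      rw [List.pairwise_cons] at hl
      obtain ⟨hk, hl'⟩ := hl
      rcases lt_trichotomy j k with hjk | hjk | hjk
      · refine ⟨1, j :: k :: l, ?_, ?_, ?_⟩
        · rw [List.pairwise_cons]
          refine ⟨?_, ?_⟩
          · intro b hb
            rcases List.mem_cons.mp hb with rfl | hb
            · exact hjk
            · exact lt_trans hjk (hk b hb)
          · rw [List.pairwise_cons]; exact ⟨hk, hl'⟩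
        · intro x hx
          rcases List.mem_cons.mp hx with rfl | hx
          · exact Or.inl rfl
          · exact Or.inr hx
        · rw [one_smul]
          rw [show prodL (j :: k :: l) = ee j * prodL (k :: l) from prodL_cons _ _]
      · refine ⟨0, [], by simp, by simp, ?_⟩
        subst hjk
        rw [prodL_cons, ← mul_assoc]
        have : ee j * ee j = 0 := ExteriorAlgebra.ι_sq_zero _
        rw [this, zero_mul, zero_smul]
      · obtain ⟨c, m, hm, hmem, heq⟩ := ih hl'
        refine ⟨-c, k :: m, ?_, ?_, ?_⟩
        · rw [List.pairwise_cons]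
          refine ⟨?_, hm⟩
          intro b hb
          rcases hmem b hb with rfl | hb'
          · exact hjk
          · exact hk b hb'
        · intro x hx
          rcases List.mem_cons.mp hx with rfl | hx
          · exact Or.inr List.mem_cons_self
          · rcases hmem x hx with rfl | hx'
            · exact Or.inl rfl
            · exact Or.inr (List.mem_cons_of_mem _ hx')
        · rw [prodL_cons, prodL_cons, ← mul_assoc, ee_anticomm j k, neg_mul,
            mul_assoc, heq, mul_smul_comm, neg_smul]

lemma sorted_eq_sort (m : List (Fin 5)) (hm : m.Pairwise (· < ·)) :
    Finset.sort m.toFinset (· ≤ ·) = m := by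
  apply fun hp h1 h2 => List.Perm.eq_of_pairwise' (r := (· ≤ · : Fin 5 → Fin 5 → Prop)) h1 h2 hp
  · have h1 : (Finset.sort m.toFinset (· ≤ ·) : Multiset (Fin 5)) = (m.toFinset).val :=
      Finset.sort_eq _ _
    have h2 : (m.toFinset).val = (m : Multiset (Fin 5)) := by
      rw [← List.toFinset_eq hm.nodup]
    rw [← Multiset.coe_eq_coe]
    rw [h1, h2]
  · exact Finset.pairwise_sort _ _
  · exact hm.imp le_of_lt

lemma vmul_gmon (j : Fin 5) (S : Finset (Fin 5)) :
    ∃ (c : ℚ) (T : Finset (Fin 5)), vg 3 5 j * gmon 3 5 0 S = c • gmon 3 5 0 T := by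
  obtain ⟨c, m, hm, _, heq⟩ := LX (S.sort (· ≤ ·)) (Finset.sortedLT_sort S).pairwise j
  refine ⟨c, m.toFinset, ?_⟩
  rw [gmon_eq, gmon_eq, sorted_eq_sort m hm]
  have h1 : vg 3 5 j * ((monomial 0 (1:ℚ) : Rr) ⊗ₜ[ℚ] prodL (S.sort (· ≤ ·)))
      = (monomial 0 (1:ℚ) : Rr) ⊗ₜ[ℚ] (ee j * prodL (S.sort (· ≤ ·))) := by
    rw [vg]
    rw [Algebra.TensorProduct.tmul_mul_tmul, one_mul]
    rfl
  rw [h1, heq, TensorProduct.tmul_smul]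

lemma vmul_Espan (j : Fin 5) {x : FGCA 3 5} (hx : x ∈ Espan) :
    vg 3 5 j * x ∈ Espan := by
  induction hx using Submodule.span_induction with
  | mem a ha =>
      obtain ⟨S, rfl⟩ := ha
      obtain ⟨c, T, hT⟩ := vmul_gmon j S
      rw [hT]
      exact Submodule.smul_mem _ _ (Submodule.subset_span ⟨T, rfl⟩)
  | zero => rw [mul_zero]; exact Submodule.zero_mem _
  | add a b _ _ ha hb => rw [mul_add]; exact Submodule.add_mem _ ha hb
  | smul c a _ ha => rw [mul_smul_comm]; exact Submodule.smul_mem _ _ ha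

lemma one_mem_Espan : (1 : FGCA 3 5) ∈ Espan := by
  rw [one_eq_gmon]; exact Submodule.subset_span ⟨∅, rfl⟩

lemma Emul_Espan (y : Ee) :
    ∀ x ∈ Espan, ((1:Rr) ⊗ₜ[ℚ] y) * x ∈ Espan := by
  induction y using ExteriorAlgebra.induction with
  | algebraMap r =>
      intro x hx
      have h : ((1:Rr) ⊗ₜ[ℚ] algebraMap ℚ Ee r) = r • (1 : FGCA 3 5) := by
        rw [Algebra.algebraMap_eq_smul_one, TensorProduct.tmul_smul,
          ← Algebra.TensorProduct.one_def]
      rw [h, smul_mul_assoc, one_mul]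
      exact Submodule.smul_mem _ _ hx
  | ι v =>
      intro x hx
      have hv : v = ∑ j : Fin 5, v j • (Pi.single j (1:ℚ) : Fin 5 → ℚ) := by
        ext k
        simp [Pi.single_apply]
      have h : ExteriorAlgebra.ι ℚ v = ∑ j : Fin 5, v j • ee j := by
        conv_lhs => rw [hv]
        simp [ee]
      rw [h]
      rw [TensorProduct.tmul_sum]
      rw [Finset.sum_mul]
      apply Submodule.sum_mem
      intro j _
      rw [TensorProduct.tmul_smul, smul_mul_assoc]
      apply Submodule.smul_mem
      exact vmul_Espan j hx
  | mul a b ha hb =>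
      intro x hx
      rw [← one_tmul_mul, mul_assoc]
      exact ha _ (hb _ hx)
  | add a b ha hb =>
      intro x hx
      rw [TensorProduct.tmul_add, add_mul]
      exact Submodule.add_mem _ (ha _ hx) (hb _ hx)

lemma mem_span_monomials (p : Rr) :
    p ∈ Submodule.span ℚ {q : Rr | ∃ α, q = monomial α (1:ℚ)} := by
  rw [← MvPolynomial.support_sum_monomial_coeff p]
  apply Submodule.sum_mem
  intro α _
  have h : (monomial α (coeff α p) : Rr) = (coeff α p) • monomial α (1:ℚ) := by
    rw [MvPolynomial.smul_monomial, smul_eq_mul, mul_one]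
  rw [h]
  exact Submodule.smul_mem _ _ (Submodule.subset_span ⟨α, rfl⟩)

lemma pmul_Espan (α : Fin 3 →₀ ℕ) {x : FGCA 3 5} (hx : x ∈ Espan) :
    ((monomial α (1:ℚ) : Rr) ⊗ₜ[ℚ] (1:Ee)) * x ∈ Vspan := by
  induction hx using Submodule.span_induction with
  | mem a ha =>
      obtain ⟨S, rfl⟩ := ha
      have h : ((monomial α (1:ℚ) : Rr) ⊗ₜ[ℚ] (1:Ee)) * gmon 3 5 0 S = gmon 3 5 α S := by
        rw [gmon_eq, gmon_eq, Algebra.TensorProduct.tmul_mul_tmul, one_mul,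
          MvPolynomial.monomial_mul, add_zero, mul_one]
      rw [h]
      exact Submodule.subset_span ⟨α, S, rfl⟩
  | zero => rw [mul_zero]; exact Submodule.zero_mem _
  | add a b _ _ ha hb => rw [mul_add]; exact Submodule.add_mem _ ha hb
  | smul c a _ ha => rw [mul_smul_comm]; exact Submodule.smul_mem _ _ ha

lemma pmul_Espan' (p : Rr) {x : FGCA 3 5} (hx : x ∈ Espan) :
    (p ⊗ₜ[ℚ] (1:Ee)) * x ∈ Vspan := by
  have hp := mem_span_monomials p
  induction hp using Submodule.span_induction with
  | mem q hq =>
      obtain ⟨α, rfl⟩ := hq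
      exact pmul_Espan α hx
  | zero => rw [TensorProduct.zero_tmul, zero_mul]; exact Submodule.zero_mem _
  | add a b _ _ ha hb =>
      rw [TensorProduct.add_tmul, add_mul]; exact Submodule.add_mem _ ha hb
  | smul c a _ ha =>
      rw [← TensorProduct.smul_tmul', smul_mul_assoc]
      exact Submodule.smul_mem _ _ ha

lemma Vspan_top (x : FGCA 3 5) : x ∈ Vspan := by
  induction x using TensorProduct.induction_on with
  | zero => exact Submodule.zero_mem _
  | add a b ha hb => exact Submodule.add_mem _ ha hb
  | tmul p y =>
      have hy : ((1:Rr) ⊗ₜ[ℚ] y) ∈ Espan := by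
        have h := Emul_Espan y 1 one_mem_Espan
        rwa [mul_one] at h
      have hpy : p ⊗ₜ[ℚ] y = (p ⊗ₜ[ℚ] (1:Ee)) * ((1:Rr) ⊗ₜ[ℚ] y) := by
        rw [Algebra.TensorProduct.tmul_mul_tmul, mul_one, one_mul]
      rw [hpy]
      exact pmul_Espan' p hy







lemma rsmul_def (r : Rr) (x : FGCA 3 5) : r • x = (r ⊗ₜ[ℚ] (1:Ee)) * x := by
  induction x using TensorProduct.induction_on with
  | zero => simp
  | tmul p q =>
      rw [TensorProduct.smul_tmul', Algebra.TensorProduct.tmul_mul_tmul, one_mul, smul_eq_mul]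
  | add a b ha hb => rw [smul_add, mul_add, ha, hb]

lemma smul_gmon (β α : Fin 3 →₀ ℕ) (S : Finset (Fin 5)) :
    (monomial β (1:ℚ) : Rr) • gmon 3 5 α S = gmon 3 5 (β + α) S := by
  rw [rsmul_def, gmon_eq, gmon_eq, Algebra.TensorProduct.tmul_mul_tmul,
    MvPolynomial.monomial_mul, one_mul, one_mul]

lemma finite_A : Module.Finite Rr (FGCA 3 5) := by
  refine ⟨Submodule.fg_def.mpr ⟨Set.range (fun S : Finset (Fin 5) => gmon 3 5 0 S),
    Set.finite_range _, ?_⟩⟩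
  rw [eq_top_iff]
  intro x hxx
  clear hxx
  have hx := Vspan_top x
  induction hx using Submodule.span_induction with
  | mem a ha =>
      obtain ⟨α, S, rfl⟩ := ha
      have h : gmon 3 5 α S = (monomial α (1:ℚ) : Rr) • gmon 3 5 0 S := by
        rw [smul_gmon, add_zero]
      rw [h]
      exact Submodule.smul_mem _ _ (Submodule.subset_span ⟨S, rfl⟩)
  | zero => exact zero_mem _
  | add a b _ _ ha hb => exact add_mem ha hb
  | smul c a _ ha =>
      have h : c • a = (c • (1:Rr)) • a := by rw [smul_assoc, one_smul]
      rw [h]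
      exact Submodule.smul_mem _ _ ha

def Mon3 : Finset Rr := ((Finset.range 8 ×ˢ Finset.range 2) ×ˢ Finset.range 4).image
  (fun p => X 0 ^ p.1.1 * X 1 ^ p.1.2 * X 2 ^ p.2)

def I3 : Ideal Rr := Ideal.span {X 0 ^ 8, X 1 ^ 2, X 2 ^ 4}

lemma mem_W (r : Rr) :
    r ∈ Submodule.span ℚ (Mon3 : Set Rr) ⊔ (I3.restrictScalars ℚ) := by
  have key : ∀ a b c : ℕ, (X 0 ^ a * X 1 ^ b * X 2 ^ c : Rr) ∈
      Submodule.span ℚ (Mon3 : Set Rr) ⊔ (I3.restrictScalars ℚ) := by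
    intro a b c
    by_cases ha : 8 ≤ a
    · apply Submodule.mem_sup_right
      show (X 0 ^ a * X 1 ^ b * X 2 ^ c : Rr) ∈ I3
      have hX : (X 0 ^ a : Rr) = X 0 ^ (a - 8) * X 0 ^ 8 := by
        rw [← pow_add, Nat.sub_add_cancel ha]
      have h : (X 0 ^ a * X 1 ^ b * X 2 ^ c : Rr)
          = (X 0 ^ (a-8) * X 1 ^ b * X 2 ^ c) * X 0 ^ 8 := by
        rw [hX]; ring
      rw [h]
      exact Ideal.mul_mem_left _ _ (Ideal.subset_span (by simp))
    by_cases hb : 2 ≤ b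
    · apply Submodule.mem_sup_right
      show (X 0 ^ a * X 1 ^ b * X 2 ^ c : Rr) ∈ I3
      have hX : (X 1 ^ b : Rr) = X 1 ^ (b - 2) * X 1 ^ 2 := by
        rw [← pow_add, Nat.sub_add_cancel hb]
      have h : (X 0 ^ a * X 1 ^ b * X 2 ^ c : Rr)
          = (X 0 ^ a * X 1 ^ (b-2) * X 2 ^ c) * X 1 ^ 2 := by
        rw [hX]; ring
      rw [h]
      exact Ideal.mul_mem_left _ _ (Ideal.subset_span (by simp))
    by_cases hc : 4 ≤ c
    · apply Submodule.mem_sup_right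
      show (X 0 ^ a * X 1 ^ b * X 2 ^ c : Rr) ∈ I3
      have hX : (X 2 ^ c : Rr) = X 2 ^ (c - 4) * X 2 ^ 4 := by
        rw [← pow_add, Nat.sub_add_cancel hc]
      have h : (X 0 ^ a * X 1 ^ b * X 2 ^ c : Rr)
          = (X 0 ^ a * X 1 ^ b * X 2 ^ (c-4)) * X 2 ^ 4 := by
        rw [hX]; ring
      rw [h]
      exact Ideal.mul_mem_left _ _ (Ideal.subset_span (by simp))
    · apply Submodule.mem_sup_left
      apply Submodule.subset_span
      simp only [Mon3, Finset.coe_image, Set.mem_image, Finset.mem_coe,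
        Finset.mem_product, Finset.mem_range]
      exact ⟨((a, b), c), ⟨⟨show a < 8 by omega, show b < 2 by omega⟩,
        show c < 4 by omega⟩, rfl⟩
  have hmono : ∀ α : Fin 3 →₀ ℕ, (monomial α (1:ℚ) : Rr) ∈
      Submodule.span ℚ (Mon3 : Set Rr) ⊔ (I3.restrictScalars ℚ) := by
    intro α
    have h1 : α = Finsupp.single 0 (α 0) + Finsupp.single 1 (α 1) + Finsupp.single 2 (α 2) := by
      ext i
      fin_cases i <;> simp [Finsupp.single_apply]
    have h2 : (monomial α (1:ℚ) : Rr) = X 0 ^ (α 0) * X 1 ^ (α 1) * X 2 ^ (α 2) := by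
      rw [X_pow_eq_monomial, X_pow_eq_monomial, X_pow_eq_monomial,
        MvPolynomial.monomial_mul, MvPolynomial.monomial_mul, mul_one, mul_one]
      rw [← h1]
    rw [h2]
    exact key _ _ _
  have hr := mem_span_monomials r
  induction hr using Submodule.span_induction with
  | mem q hq => obtain ⟨α, rfl⟩ := hq; exact hmono α
  | zero => exact zero_mem _
  | add a b _ _ ha hb => exact add_mem ha hb
  | smul q a _ ha => exact Submodule.smul_mem _ _ ha

lemma tg_pow (i : Fin 3) (k : ℕ) : tg 3 5 i ^ k = ((X i ^ k : Rr) ⊗ₜ[ℚ] (1:Ee)) := by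
  induction k with
  | zero => simp [Algebra.TensorProduct.one_def]
  | succ n ih =>
      rw [pow_succ, ih, tg, Algebra.TensorProduct.tmul_mul_tmul, mul_one, ← pow_succ]

section Dcoc

variable (D : FGCA 3 5 →ₗ[ℚ] FGCA 3 5)

lemma coc2 (hLeib : IsLeibniz 3 5 dv D) (hD5 : D (vg 3 5 2) = tg 3 5 1 ^ 2)
    (g : FGCA 3 5) (hg : D g = 0) :
    (X 1 ^ 2 : Rr) • g ∈ LinearMap.range D := by
  have h := hLeib 3 (vg 3 5 2) g (show vg 3 5 2 ∈ homog 3 5 dv 3 from vg_mem 2)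
  rw [hD5, hg, mul_zero, smul_zero, add_zero] at h
  have hX : (X 1 ^ 2 : Rr) • g = tg 3 5 1 ^ 2 * g := by
    rw [rsmul_def, tg_pow]
  rw [hX, ← h]
  exact ⟨_, rfl⟩

lemma coc3 (hLeib : IsLeibniz 3 5 dv D) (hD7 : D (vg 3 5 4) = tg 3 5 2 ^ 4)
    (g : FGCA 3 5) (hg : D g = 0) :
    (X 2 ^ 4 : Rr) • g ∈ LinearMap.range D := by
  have h := hLeib 7 (vg 3 5 4) g (show vg 3 5 4 ∈ homog 3 5 dv 7 from vg_mem 4)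
  rw [hD7, hg, mul_zero, smul_zero, add_zero] at h
  have hX : (X 2 ^ 4 : Rr) • g = tg 3 5 2 ^ 4 * g := by
    rw [rsmul_def, tg_pow]
  rw [hX, ← h]
  exact ⟨_, rfl⟩

lemma cmem : vg 3 5 0 * vg 3 5 1 * tg 3 5 0 ∈ homog 3 5 dv 8 := by
  have hsort : (({0, 1} : Finset (Fin 5)).sort (· ≤ ·)) = [0, 1] := by
    have h1 : ({0, 1} : Finset (Fin 5)).sort (· ≤ ·)
        = 0 :: ({1} : Finset (Fin 5)).sort (· ≤ ·) :=
      Finset.sort_insert (· ≤ ·) (by decide) (by decide)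
    rw [h1, Finset.sort_singleton]
  have hgm : vg 3 5 0 * vg 3 5 1 * tg 3 5 0 = gmon 3 5 (Finsupp.single 0 1) {0, 1} := by
    rw [gmon_eq, hsort]
    rw [vg, vg, tg, Algebra.TensorProduct.tmul_mul_tmul, Algebra.TensorProduct.tmul_mul_tmul,
      one_mul, one_mul, mul_one]
    have h1 : (monomial (Finsupp.single 0 1) (1:ℚ) : Rr) = X 0 := by
      rw [← MvPolynomial.X_pow_eq_monomial, pow_one]
    rw [h1]
    congr 1
    simp [prodL, ee]
  have hd : gdeg 3 5 dv (Finsupp.single 0 1) ({0, 1} : Finset (Fin 5)) = 8 := by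
    rw [gdeg, Finsupp.sum_single_index (by simp)]
    rw [show (({0,1} : Finset (Fin 5)).sum dv) = 6 from by decide]
  rw [hgm, ← hd]
  exact mem_homog_gmon _ _

lemma coc1 (hLeib : IsLeibniz 3 5 dv D)
    (hD0 : D (tg 3 5 0) = 0) (hD1 : D (tg 3 5 1) = 0) (hD2 : D (tg 3 5 2) = 0)
    (hD3 : D (vg 3 5 0) = 0) (hD4 : D (vg 3 5 1) = 0)
    (hD6 : D (vg 3 5 3) = tg 3 5 0 ^ 4 + vg 3 5 0 * vg 3 5 1 * tg 3 5 0)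
    (g : FGCA 3 5) (hg : D g = 0) :
    (X 0 ^ 8 : Rr) • g ∈ LinearMap.range D := by
  have hDt : ∀ i, D (tg 3 5 i) = 0 := by intro i; fin_cases i <;> assumption
  set c : FGCA 3 5 := vg 3 5 0 * vg 3 5 1 * tg 3 5 0 with hc
  set u : FGCA 3 5 := tg 3 5 0 ^ 4 with hu
  have hw : D (vg 3 5 3 * g) = (u + c) * g := by
    have h := hLeib 7 (vg 3 5 3) g (show vg 3 5 3 ∈ homog 3 5 dv 7 from vg_mem 3)
    rw [hD6, hg, mul_zero, smul_zero, add_zero] at h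
    exact h
  have hDc : D c = 0 := D_c D hLeib hD0 hD3 hD4
  have hcT : c = (X 0 : Rr) ⊗ₜ[ℚ] (ee 0 * ee 1) := by
    rw [hc, vg, vg, tg, Algebra.TensorProduct.tmul_mul_tmul,
      Algebra.TensorProduct.tmul_mul_tmul, one_mul, one_mul, mul_one]
    rfl
  have hcc : c * c = 0 := by
    rw [hcT, Algebra.TensorProduct.tmul_mul_tmul]
    have h01 : ee 1 * ee 0 = -(ee 0 * ee 1) := ee_anticomm 1 0
    have hz : ee 0 * ee 1 * (ee 0 * ee 1) = 0 := by
      calc ee 0 * ee 1 * (ee 0 * ee 1)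
          = ee 0 * (ee 1 * ee 0 * ee 1) := by noncomm_ring
        _ = ee 0 * (-(ee 0 * ee 1) * ee 1) := by rw [h01]
        _ = 0 := by
            rw [neg_mul, mul_neg, mul_assoc,
              show ee 1 * ee 1 = 0 from ExteriorAlgebra.ι_sq_zero _,
              mul_zero, mul_zero, neg_zero]
    rw [hz, TensorProduct.tmul_zero]
  have hcomm : u * c = c * u := by
    rw [hu, tg_pow, hcT, Algebra.TensorProduct.tmul_mul_tmul,
      Algebra.TensorProduct.tmul_mul_tmul, mul_one, one_mul, mul_comm]
  have hkey : (X 0 ^ 8 : Rr) • g = u * D (vg 3 5 3 * g) - c * D (vg 3 5 3 * g) := by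
    rw [hw]
    have h8 : (X 0 ^ 8 : Rr) • g = (u * u) * g := by
      rw [rsmul_def, hu, tg_pow, Algebra.TensorProduct.tmul_mul_tmul, mul_one, ← pow_add]
    have hsub : u * (u + c) - c * (u + c) = u * u := by
      rw [mul_add, mul_add, hcomm, hcc, add_zero]
      abel
    rw [h8, ← mul_assoc, ← mul_assoc, ← sub_mul, hsub]
  have h1 : u * D (vg 3 5 3 * g) = D (u * (vg 3 5 3 * g)) := by
    rw [hu, tg_pow, D_p_mul D hLeib hDt]
  have h2 : c * D (vg 3 5 3 * g) = D (c * (vg 3 5 3 * g)) := by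
    have h := hLeib 8 c (vg 3 5 3 * g) cmem
    rw [hDc, zero_mul, zero_add] at h
    rw [h]
    norm_num
  rw [hkey, h1, h2, ← map_sub]
  exact ⟨_, rfl⟩

end Dcoc

theorem stmt_4 (D : FGCA 3 5 →ₗ[ℚ] FGCA 3 5)
    (hLeib : IsLeibniz 3 5 dv D)
    (hdeg : RaisesDegByOne 3 5 dv D)
    (hD0 : D t₁ = (0 : FGCA 3 5))
    (hD1 : D t₂ = (0 : FGCA 3 5))
    (hD2 : D t₃ = (0 : FGCA 3 5))
    (hD3 : D v₁ = (0 : FGCA 3 5))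
    (hD4 : D v₂ = (0 : FGCA 3 5))
    (hD5 : D v₃ = t₂ ^ 2)
    (hD6 : D v₄ = t₁ ^ 4 + v₁ * v₂ * t₁)
    (hD7 : D v₅ = t₃ ^ 4)
    : D ∘ₗ D = 0 ∧ FiniteDimensional ℚ (Cohomology 3 5 D) := by
  have hDt : ∀ i, D (tg 3 5 i) = 0 := by intro i; fin_cases i <;> assumption
  have hD2all : ∀ x, D (D x) = 0 := by
    intro x
    have hx := Vspan_top x
    induction hx using Submodule.span_induction with
    | mem a ha =>
        obtain ⟨α, S, rfl⟩ := ha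
        exact D2_gmon D hLeib hdeg hD0 hD1 hD2 hD3 hD4 hD5 hD6 hD7 α S
    | zero => simp
    | add a b _ _ ha hb => rw [map_add, map_add, ha, hb, add_zero]
    | smul c a _ ha => rw [map_smul, map_smul, ha, smul_zero]
  refine ⟨LinearMap.ext fun x => hD2all x, ?_⟩
  -- Part 2
  haveI : Module.Finite Rr (FGCA 3 5) := finite_A
  let D' : FGCA 3 5 →ₗ[Rr] FGCA 3 5 :=
    { toFun := D
      map_add' := fun a b => map_add D a b
      map_smul' := fun r x => D_smul D hLeib hDt r x }
  haveI : IsNoetherian Rr (FGCA 3 5) := isNoetherian_of_isNoetherianRing_of_finite Rr _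
  have hKfg : (LinearMap.ker D').FG := IsNoetherian.noetherian _
  obtain ⟨s, hs⟩ := hKfg
  set Rng : Submodule ℚ (FGCA 3 5) := LinearMap.range D with hRng
  have hstab : ∀ (r : Rr) (x : FGCA 3 5), x ∈ Rng → r • x ∈ Rng := by
    rintro r x ⟨y, rfl⟩
    exact ⟨r • y, D_smul D hLeib hDt r y⟩
  set F : Submodule ℚ (FGCA 3 5) := Submodule.span ℚ
    ((fun p : Rr × FGCA 3 5 => p.1 • p.2) '' ((Mon3 : Set Rr) ×ˢ (s : Set (FGCA 3 5)))) with hF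
  have hsker : ∀ g ∈ s, D g = 0 := by
    intro g hg
    have h : g ∈ LinearMap.ker D' := hs ▸ Submodule.subset_span hg
    exact h
  have hFstep : ∀ (g : FGCA 3 5), g ∈ s → ∀ f : Rr,
      f ∈ Submodule.span ℚ (Mon3 : Set Rr) → f • g ∈ F := by
    intro g hgs f hf
    induction hf using Submodule.span_induction with
    | mem m hm => exact Submodule.subset_span ⟨(m, g), ⟨hm, hgs⟩, rfl⟩
    | zero => rw [zero_smul]; exact zero_mem _
    | add a b _ _ ha hb => rw [add_smul]; exact add_mem ha hb
    | smul q a _ ha => rw [smul_assoc]; exact Submodule.smul_mem _ _ ha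
  have hIstep : ∀ (g : FGCA 3 5), D g = 0 → ∀ i : Rr, i ∈ I3 → i • g ∈ Rng := by
    intro g hg i hi
    induction hi using Submodule.span_induction with
    | mem e he =>
        simp only [Set.mem_insert_iff, Set.mem_singleton_iff] at he
        rcases he with rfl | rfl | rfl
        · exact coc1 D hLeib hD0 hD1 hD2 hD3 hD4 hD6 g hg
        · exact coc2 D hLeib hD5 g hg
        · exact coc3 D hLeib hD7 g hg
    | zero => rw [zero_smul]; exact zero_mem _
    | add a b _ _ ha hb => rw [add_smul]; exact add_mem ha hb
    | smul q a _ ha =>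
        rw [smul_eq_mul, mul_smul]
        exact hstab q _ ha
  have claim0 : ∀ (r : Rr) (g : FGCA 3 5), g ∈ s → r • g ∈ F ⊔ Rng := by
    intro r g hgs
    have hg : D g = 0 := hsker g hgs
    obtain ⟨f, hf, i, hi, hfi⟩ := Submodule.mem_sup.mp (mem_W r)
    rw [← hfi, add_smul]
    exact Submodule.add_mem _ (Submodule.mem_sup_left (hFstep g hgs f hf))
      (Submodule.mem_sup_right (hIstep g hg i hi))
  have hFsmul : ∀ (r : Rr) (f : FGCA 3 5), f ∈ F → r • f ∈ F ⊔ Rng := by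
    intro r f hf
    induction hf using Submodule.span_induction with
    | mem a ha =>
        obtain ⟨⟨m, g⟩, ⟨hm, hg⟩, rfl⟩ := ha
        rw [smul_smul]
        exact claim0 (r * m) g hg
    | zero => rw [smul_zero]; exact zero_mem _
    | add a b _ _ ha hb => rw [smul_add]; exact add_mem ha hb
    | smul q a _ ha =>
        rw [← smul_comm q r a]
        exact Submodule.smul_mem _ _ ha
  have claim : ∀ x, x ∈ Submodule.span Rr (s : Set (FGCA 3 5)) → x ∈ F ⊔ Rng := by
    intro x hxk
    induction hxk using Submodule.span_induction with
    | mem g hg =>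
        have h := claim0 1 g hg
        rwa [one_smul] at h
    | zero => exact zero_mem _
    | add a b _ _ ha hb => exact add_mem ha hb
    | smul r x hx' hmem =>
        obtain ⟨f, hf, d, hd, rfl⟩ := Submodule.mem_sup.mp hmem
        rw [smul_add]
        exact Submodule.add_mem _ (hFsmul r f hf)
          (Submodule.mem_sup_right (hstab r d hd))
  have hle : (LinearMap.ker D).map Rng.mkQ ≤ F.map Rng.mkQ := by
    rintro z ⟨x, hx, rfl⟩
    have hxk : x ∈ Submodule.span Rr (s : Set (FGCA 3 5)) := by
      rw [hs]
      exact hx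
    obtain ⟨f, hf, d, hd, rfl⟩ := Submodule.mem_sup.mp (claim x hxk)
    refine ⟨f, hf, ?_⟩
    have hzero : Rng.mkQ d = 0 := by
      rw [Submodule.mkQ_apply, Submodule.Quotient.mk_eq_zero]
      exact hd
    rw [map_add, hzero, add_zero]
  haveI hFfin : FiniteDimensional ℚ F := by
    rw [hF]
    exact FiniteDimensional.span_of_finite ℚ
      (Set.Finite.image _ (Set.Finite.prod (Mon3.finite_toSet) (s.finite_toSet)))
  haveI : FiniteDimensional ℚ (F.map Rng.mkQ) := Module.Finite.map F Rng.mkQ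
  exact Submodule.finiteDimensional_of_le hle


end
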